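/- Given a formal series a(ωz) arising from a(z) ∈ A_1 by substituting z ↦ ωz (ω = e^{iπ/(r+1)}), there is a unique formal series d(z) = 1 + Σ_{k≥1} d_k z^{-(r+1)k} such that −S_z^⋆(d(z)/z) = a(ωz). -/

import Mathlib

/-!
Coefficientwise, `-S_z^⋆(d(z)/z) = a(ωz)` reads `d_m - (m - (r+1)/2) d_{m-r-1} = ω^{-m} a_m`: a
first-order recursion along the progression `(r+1)ℕ`. As `d` vanishes at negative exponents, it starts
from `d_0 = a_0 = 1` and determines every coefficient, while off `(r+1)ℕ` both sides vanish.
-/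

open HahnSeries Pointwise

/-- The operator `S_z = z^{1-r} ∂_z - (r-1)/(2 z^r) - z` acting on formal Laurent
series with finitely many positive powers of `z`, written in the variable
`t = z⁻¹` (so `coeff m` is the coefficient of `z^{-m}`). -/
noncomputable def Sop (r : ℕ) (f : LaurentSeries ℂ) : LaurentSeries ℂ where
  coeff m := ((r + 1 : ℂ) / 2 - m) * f.coeff (m - r) - f.coeff (m + 1)
  isPWO_support' := by
    have h : (Function.support fun m : ℤ =>
        ((r + 1 : ℂ) / 2 - m) * f.coeff (m - r) - f.coeff (m + 1))
        ⊆ (f.support + {(r : ℤ)}) ∪ (f.support + ({(-1 : ℤ)} : Set ℤ)) := by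
      intro m hm
      simp only [Function.mem_support] at hm
      by_cases h1 : f.coeff (m - (r : ℤ)) = 0
      · have h2 : f.coeff (m + 1) ≠ 0 := fun h2 => hm (by rw [h1, h2]; ring)
        right
        exact Set.mem_add.mpr ⟨m + 1, by simpa using h2, -1, rfl, by ring⟩
      · left
        exact Set.mem_add.mpr ⟨m - r, by simpa using h1, r, rfl, by ring⟩
    exact ((f.isPWO_support.add (Set.isPWO_singleton (r : ℤ))).union
      (f.isPWO_support.add (Set.isPWO_singleton (-1 : ℤ)))).mono h

/-- The formal adjoint `S_z^⋆ = -z^{1-r} ∂_z + (r-1)/(2 z^r) - z`. -/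
noncomputable def Sstar (r : ℕ) (f : LaurentSeries ℂ) : LaurentSeries ℂ where
  coeff m := ((m : ℂ) - (r + 1) / 2) * f.coeff (m - r) - f.coeff (m + 1)
  isPWO_support' := by
    have h : (Function.support fun m : ℤ =>
        ((m : ℂ) - (r + 1) / 2) * f.coeff (m - r) - f.coeff (m + 1))
        ⊆ (f.support + {(r : ℤ)}) ∪ (f.support + ({(-1 : ℤ)} : Set ℤ)) := by
      intro m hm
      simp only [Function.mem_support] at hm
      by_cases h1 : f.coeff (m - (r : ℤ)) = 0
      · have h2 : f.coeff (m + 1) ≠ 0 := fun h2 => hm (by rw [h1, h2]; ring)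
        right
        exact Set.mem_add.mpr ⟨m + 1, by simpa using h2, -1, rfl, by ring⟩
      · left
        exact Set.mem_add.mpr ⟨m - r, by simpa using h1, r, rfl, by ring⟩
    exact ((f.isPWO_support.add (Set.isPWO_singleton (r : ℤ))).union
      (f.isPWO_support.add (Set.isPWO_singleton (-1 : ℤ)))).mono h

/-- Substitution `z ↦ ω z` on a formal Laurent series (`coeff m` is the
coefficient of `z^{-m}`, which gets multiplied by `ω^{-m}`). -/
noncomputable def rot (ω : ℂ) (f : LaurentSeries ℂ) : LaurentSeries ℂ where
  coeff m := ω ^ (-m) * f.coeff m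
  isPWO_support' := f.isPWO_support.mono (fun m hm => by
    simp only [Function.mem_support] at hm ⊢
    exact fun h => hm (by rw [h, mul_zero]))

namespace LaurentSeries

variable {R : Type*} [Ring R] {N : ℤ}

noncomputable def natMulEmbedding (N : ℤ) (hN : 0 < N) : ℕ ↪o ℤ :=
  OrderEmbedding.ofStrictMono (fun k : ℕ => N * k) fun _ _ h => by
    dsimp only
    gcongr

lemma coeff_eq_zero_of_neg (hN : 0 < N) {f : LaurentSeries R}
    (hf : ∀ m, f.coeff m ≠ 0 → ∃ k : ℕ, m = N * k) {m : ℤ} (hm : m < 0) : f.coeff m = 0 := by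
  by_contra h
  obtain ⟨k, rfl⟩ := hf m h
  have : 0 ≤ N * k := by positivity
  omega

lemma eq_zero_of_coeff_eq_mul_coeff_sub (hN : 0 < N) (c : ℤ → R) {f : LaurentSeries R}
    (hf : ∀ m, f.coeff m ≠ 0 → ∃ k : ℕ, m = N * k)
    (hrec : ∀ m, f.coeff m = c m * f.coeff (m - N)) : f = 0 := by
  have hmul (k : ℕ) : f.coeff (N * k) = 0 := by
    induction k with
    | zero => simpa [coeff_eq_zero_of_neg hN hf (neg_neg_of_pos hN)] using hrec 0
    | succ k ih => rw [hrec, show N * (k + 1 : ℕ) - N = N * k by push_cast; ring, ih, mul_zero]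
  ext m
  by_contra h
  obtain ⟨k, rfl⟩ := hf m h
  exact h (hmul k)

def stepRecCoeff (N : ℤ) (b c : ℤ → R) : ℕ → R
  | 0 => b 0
  | k + 1 => b (N * (k + 1 : ℕ)) + c (N * (k + 1 : ℕ)) * stepRecCoeff N b c k

noncomputable def stepRecSolution (N : ℤ) (hN : 0 < N) (b c : ℤ → R) : LaurentSeries R :=
  embDomain (natMulEmbedding N hN) (toPowerSeries.symm (PowerSeries.mk (stepRecCoeff N b c)))

lemma coeff_stepRecSolution_mul (hN : 0 < N) (b c : ℤ → R) (k : ℕ) :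
    (stepRecSolution N hN b c).coeff (N * k) = stepRecCoeff N b c k := by
  rw [stepRecSolution, show N * k = natMulEmbedding N hN k from rfl, embDomain_coeff,
    coeff_toPowerSeries_symm, PowerSeries.coeff_mk]

lemma exists_eq_mul_of_coeff_stepRecSolution_ne_zero (hN : 0 < N) (b c : ℤ → R) (m : ℤ)
    (hm : (stepRecSolution N hN b c).coeff m ≠ 0) : ∃ k : ℕ, m = N * k := by
  by_contra h
  exact hm (embDomain_of_notMem_range fun ⟨k, hk⟩ => h ⟨k, hk.symm⟩)

lemma coeff_stepRecSolution_sub (hN : 0 < N) {b : ℤ → R} (c : ℤ → R)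
    (hb : ∀ m, b m ≠ 0 → ∃ k : ℕ, m = N * k) (m : ℤ) :
    (stepRecSolution N hN b c).coeff m - c m * (stepRecSolution N hN b c).coeff (m - N) = b m := by
  have hsupp := exists_eq_mul_of_coeff_stepRecSolution_ne_zero hN b c
  by_cases hm : ∃ k : ℕ, m = N * k
  · obtain ⟨_ | k, rfl⟩ := hm
    · have h0 := coeff_stepRecSolution_mul hN b c 0
      rw [Nat.cast_zero, mul_zero] at h0 ⊢
      rw [h0, coeff_eq_zero_of_neg hN hsupp (by omega), mul_zero, sub_zero, stepRecCoeff]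
    · rw [show N * (k + 1 : ℕ) - N = N * k by push_cast; ring, coeff_stepRecSolution_mul,
        coeff_stepRecSolution_mul, stepRecCoeff, add_sub_cancel_right]
  · have hprev : ¬ ∃ k : ℕ, m - N = N * k :=
      fun ⟨k, hk⟩ => hm ⟨k + 1, by push_cast; linarith⟩
    rw [not_imp_comm.mp (hsupp m) hm, not_imp_comm.mp (hsupp (m - N)) hprev,
      not_imp_comm.mp (hb m) hm, mul_zero, sub_zero]

theorem existsUnique_coeff_sub_mul_coeff_sub_eq (hN : 0 < N) {b : ℤ → R} (c : ℤ → R)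
    (hb : ∀ m, b m ≠ 0 → ∃ k : ℕ, m = N * k) :
    ∃! f : LaurentSeries R, (∀ m, f.coeff m ≠ 0 → ∃ k : ℕ, m = N * k) ∧
      ∀ m, f.coeff m - c m * f.coeff (m - N) = b m := by
  set g := stepRecSolution N hN b c
  have hg := exists_eq_mul_of_coeff_stepRecSolution_ne_zero hN b c
  refine ⟨g, ⟨hg, coeff_stepRecSolution_sub hN c hb⟩, ?_⟩
  rintro f ⟨hf, hfrec⟩
  rw [← sub_eq_zero]
  refine eq_zero_of_coeff_eq_mul_coeff_sub hN c (fun m hm => ?_) fun m => ?_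
  · by_cases hfm : f.coeff m = 0
    · exact hg m (by simpa [hfm] using hm)
    · exact hf m hfm
  · rw [coeff_sub, coeff_sub, mul_sub, ← sub_eq_zero, sub_sub_sub_comm, hfrec,
      coeff_stepRecSolution_sub hN c hb, sub_self]

end LaurentSeries

lemma coeff_neg_Sstar_single_one_mul (r : ℕ) (d : LaurentSeries ℂ) (m : ℤ) :
    (-(Sstar r (single (1 : ℤ) 1 * d))).coeff m =
      d.coeff m - ((m : ℂ) - (r + 1) / 2) * d.coeff (m - ((r : ℤ) + 1)) := by
  have hshift (n : ℤ) : (single (1 : ℤ) (1 : ℂ) * d).coeff n = d.coeff (n - 1) := by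
    simpa using coeff_single_mul_add (r := (1 : ℂ)) (x := d) (a := n - 1) (b := 1)
  simp only [Sstar, coeff_neg, hshift, add_sub_cancel_right, sub_sub]
  ring

theorem exists_unique_d_general (r : ℕ) (a : LaurentSeries ℂ)
    (ha0 : a.coeff 0 = 1)
    (hsupp : ∀ m : ℤ, a.coeff m ≠ 0 → ∃ k : ℕ, m = ((r : ℤ) + 1) * k) :
    let ω : ℂ := Complex.exp (Real.pi * Complex.I / (r + 1))
    ∃! d : LaurentSeries ℂ,
      (d.coeff 0 = 1 ∧ ∀ m : ℤ, d.coeff m ≠ 0 → ∃ k : ℕ, m = ((r : ℤ) + 1) * k) ∧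
      -(Sstar r (HahnSeries.single (1 : ℤ) 1 * d)) = rot ω a := by
  intro ω
  have hN : (0 : ℤ) < r + 1 := by positivity
  have hb (m : ℤ) (hm : (rot ω a).coeff m ≠ 0) : ∃ k : ℕ, m = ((r : ℤ) + 1) * k :=
    hsupp m (right_ne_zero_of_mul hm)
  refine (existsUnique_congr fun d => ?_).mpr
    (LaurentSeries.existsUnique_coeff_sub_mul_coeff_sub_eq hN (fun m => (m : ℂ) - (r + 1) / 2) hb)
  rw [HahnSeries.ext_iff, funext_iff]
  simp only [coeff_neg_Sstar_single_one_mul]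
  refine ⟨fun ⟨⟨_, hs⟩, he⟩ => ⟨hs, he⟩, fun ⟨hs, he⟩ => ⟨⟨?_, hs⟩, he⟩⟩
  have hprev : d.coeff (0 - ((r : ℤ) + 1)) = 0 := LaurentSeries.coeff_eq_zero_of_neg hN hs (by omega)
  have h0 := he 0
  rw [hprev, mul_zero, sub_zero] at h0
  simpa [rot, ha0] using h0

/-- Given `a ∈ A_1` (so `a(ωz)` is well defined, `ω = exp(iπ/(r+1))`), there is a
unique formal series `d(z) = 1 + Σ_{k≥1} d_k z^{-(r+1)k}` with
`-S_z^⋆(d(z)/z) = a(ωz)`.  (`d(z)/z = single 1 1 * d` in the variable `t = z⁻¹`.) -/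
theorem exists_unique_d (r : ℕ) (hr : 2 ≤ r) (a : LaurentSeries ℂ)
    (ha0 : a.coeff 0 = 1)
    (hsupp : ∀ m : ℤ, a.coeff m ≠ 0 → ∃ k : ℕ, m = ((r : ℤ) + 1) * k) :
    let ω : ℂ := Complex.exp (Real.pi * Complex.I / (r + 1))
    ∃! d : LaurentSeries ℂ,
      (d.coeff 0 = 1 ∧ ∀ m : ℤ, d.coeff m ≠ 0 → ∃ k : ℕ, m = ((r : ℤ) + 1) * k) ∧
      -(Sstar r (HahnSeries.single (1 : ℤ) 1 * d)) = rot ω a :=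
  exists_unique_d_general r a ha0 hsupp
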